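/- For every k ≥ 1, the following identities hold: r_k = 2(α_k − 1)²/(β_{k+1} − α_k), r_{k+1} = 2(β_{k+1} − 1)²/(β_{k+1} − α_k), and consequently √(r_k)/(α_k − 1) = √(r_{k+1})/(β_{k+1} − 1). -/
import Mathlib


open Finset

/-- The silver ratio ρ = 1 + √2. -/
noncomputable def rho : ℝ := 1 + Real.sqrt 2

/-- Entry `i` of the silver stepsize schedule π^(k) ∈ ℝ^(2^k − 1) (0-indexed):
π^(1) = [√2], π^(k+1) = [π^(k), β_k, π^(k)] where β_k = 1 + ρ^(k−1). -/
noncomputable def piSilver : ℕ → ℕ → ℝ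
  | 0, _ => 0
  | 1, _ => Real.sqrt 2
  | k + 2, i =>
      if i < 2 ^ (k + 1) - 1 then piSilver (k + 1) i
      else if i = 2 ^ (k + 1) - 1 then 1 + rho ^ k
      else piSilver (k + 1) (i - 2 ^ (k + 1))

/-- The sequence r_k: r_1 = 4, r_{k+1} = (r_k + 4ρ^k + √(r_k(r_k + 8ρ^k)))/2. -/
noncomputable def rseq : ℕ → ℝ
  | 0 => 0
  | 1 => 4
  | k + 2 =>
      (rseq (k + 1) + 4 * rho ^ (k + 1)
        + Real.sqrt (rseq (k + 1) * (rseq (k + 1) + 8 * rho ^ (k + 1)))) / 2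

/-- α_k = 1 + (√(r_k(r_k + 8ρ^k)) − r_k)/4. -/
noncomputable def alphaSeq (k : ℕ) : ℝ :=
  1 + (Real.sqrt (rseq k * (rseq k + 8 * rho ^ k)) - rseq k) / 4

/-- Entry `i` of h_right^(k) ∈ ℝ^(2^k − 1) (0-indexed):
h_right^(1) = [3/2], h_right^(k+1) = [π^(k), α_k, h_right^(k)]. -/
noncomputable def hright : ℕ → ℕ → ℝ
  | 0, _ => 0
  | 1, _ => 3 / 2
  | k + 2, i =>
      if i < 2 ^ (k + 1) - 1 then piSilver (k + 1) i
      else if i = 2 ^ (k + 1) - 1 then alphaSeq (k + 1)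
      else hright (k + 1) (i - 2 ^ (k + 1))

/-- h_left^(k) is h_right^(k) with its entries reversed. -/
noncomputable def hleft (k i : ℕ) : ℝ := hright k (2 ^ k - 2 - i)

/-- β_k = 1 + ρ^(k−1) for integer k. -/
noncomputable def betaZ (k : ℤ) : ℝ := 1 + rho ^ (k - 1)


section Aux

lemma rho_pos' : (0:ℝ) < rho := by
  have h := Real.sqrt_nonneg 2
  unfold rho; linarith

lemma rseq_pos' : ∀ k : ℕ, 1 ≤ k → 0 < rseq k := by
  intro k
  induction k with
  | zero => omega
  | succ n ih =>
    intro _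
    match n, ih with
    | 0, _ => norm_num [rseq]
    | m + 1, ih =>
      have h1 : 0 < rseq (m + 1) := ih (by omega)
      have h2 : 0 < rho ^ (m + 1) := pow_pos rho_pos' _
      have h3 : 0 ≤ Real.sqrt (rseq (m + 1) * (rseq (m + 1) + 8 * rho ^ (m + 1))) :=
        Real.sqrt_nonneg _
      rw [rseq]
      linarith

end Aux


/-- **Lemma.** For every `k ≥ 1`: `r_k = 2(α_k − 1)²/(β_{k+1} − α_k)`,
`r_{k+1} = 2(β_{k+1} − 1)²/(β_{k+1} − α_k)`, and
`√r_k/(α_k − 1) = √r_{k+1}/(β_{k+1} − 1)`. -/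
theorem r_formulas (k : ℕ) (hk : 1 ≤ k) :
    rseq k = 2 * (alphaSeq k - 1) ^ 2 / (betaZ ((k : ℤ) + 1) - alphaSeq k) ∧
    rseq (k + 1) = 2 * (betaZ ((k : ℤ) + 1) - 1) ^ 2 / (betaZ ((k : ℤ) + 1) - alphaSeq k) ∧
    Real.sqrt (rseq k) / (alphaSeq k - 1)
      = Real.sqrt (rseq (k + 1)) / (betaZ ((k : ℤ) + 1) - 1) := by
  set r := rseq k with hr
  set s := Real.sqrt (r * (r + 8 * rho ^ k)) with hs
  have hrpos : 0 < r := rseq_pos' k hk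
  have hρ : 0 < rho ^ k := pow_pos rho_pos' k
  have hs2 : s ^ 2 = r * (r + 8 * rho ^ k) := by
    rw [hs]; exact Real.sq_sqrt (by nlinarith)
  have hsnn : 0 ≤ s := Real.sqrt_nonneg _
  -- s > r
  have hsr : r < s := by
    rw [hs]
    rw [show r * (r + 8 * rho ^ k) = r ^ 2 + 8 * r * rho ^ k by ring]
    have : r = Real.sqrt (r ^ 2) := by
      rw [Real.sqrt_sq hrpos.le]
    nth_rewrite 1 [this]
    apply Real.sqrt_lt_sqrt (by positivity)
    nlinarith
  -- s < r + 4ρ^k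
  have hslt : s < r + 4 * rho ^ k := by
    rw [hs]
    rw [show r + 4 * rho ^ k = Real.sqrt ((r + 4 * rho ^ k) ^ 2) from
      (Real.sqrt_sq (by positivity)).symm]
    apply Real.sqrt_lt_sqrt (by nlinarith)
    nlinarith
  -- beta
  have hbeta : betaZ ((k : ℤ) + 1) = 1 + rho ^ k := by
    unfold betaZ
    rw [show (k : ℤ) + 1 - 1 = (k : ℤ) by ring, zpow_natCast]
  have halpha : alphaSeq k = 1 + (s - r) / 4 := rfl
  -- r_{k+1}
  obtain ⟨m, rfl⟩ : ∃ m, k = m + 1 := ⟨k - 1, by omega⟩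
  have hnext : rseq (m + 1 + 1) = (r + 4 * rho ^ (m + 1) + s) / 2 := by
    rw [rseq]
  have hD : 0 < betaZ ((m + 1 : ℕ) + 1) - alphaSeq (m + 1) := by
    rw [hbeta, halpha]; linarith
  have hα1 : 0 < alphaSeq (m + 1) - 1 := by rw [halpha]; linarith
  refine ⟨?_, ?_, ?_⟩
  · rw [eq_div_iff hD.ne', hbeta, halpha]
    nlinarith [hs2]
  · rw [eq_div_iff hD.ne', hbeta, halpha, hnext]
    nlinarith [hs2]
  · have hr1pos : 0 < rseq (m + 1 + 1) := rseq_pos' _ (by omega)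
    have key : r * (rho ^ (m + 1)) ^ 2 = rseq (m + 1 + 1) * (alphaSeq (m + 1) - 1) ^ 2 := by
      rw [hnext, halpha]; nlinarith [hs2]
    have h1 : Real.sqrt (r * (rho ^ (m + 1)) ^ 2) = Real.sqrt r * rho ^ (m + 1) := by
      rw [Real.sqrt_mul hrpos.le, Real.sqrt_sq (by positivity)]
    have h2 : Real.sqrt (rseq (m + 1 + 1) * (alphaSeq (m + 1) - 1) ^ 2)
        = Real.sqrt (rseq (m + 1 + 1)) * (alphaSeq (m + 1) - 1) := by
      rw [Real.sqrt_mul hr1pos.le, Real.sqrt_sq hα1.le]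
    have h3 : Real.sqrt r * rho ^ (m + 1)
        = Real.sqrt (rseq (m + 1 + 1)) * (alphaSeq (m + 1) - 1) := by
      rw [← h1, ← h2, key]
    rw [hbeta]
    rw [div_eq_div_iff hα1.ne' (by linarith : (1 + rho ^ (m + 1) - 1 : ℝ) ≠ 0)]
    · rw [show (1 + rho ^ (m + 1) - 1 : ℝ) = rho ^ (m + 1) by ring]
      linarith [h3]
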